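/- Strict Hubble decrease under ghost freedom in the explicit model: let β > 0, V ∈ ℝ, and let X, H : ℝ → ℝ with H differentiable, and suppose at some time t one has X(t) > 0, H(t) ≠ 0, the ghost-free condition M(X(t),H(t)) > 0, and the Raychaudhuri equation H′(t) = −X(t)·P_X(X(t),H(t)). Then H′(t) < 0 strictly. -/
import Mathlib


/-- Partial derivative with respect to `X` of the effective pressure
`P(X,H) = X − V − β·X²/(H² + X)`. -/
noncomputable def PX (β X H : ℝ) : ℝ :=
  1 - β * (2 * X * H ^ 2 + X ^ 2) / (H ^ 2 + X) ^ 2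

/-- Kinetic response function `M(X,H) = ∂ρ/∂X`. -/
noncomputable def Mresp (β X H : ℝ) : ℝ :=
  1 - β * X * (6 * H ^ 4 + 3 * H ^ 2 * X + X ^ 2) / (H ^ 2 + X) ^ 3

lemma PX_gt_Mresp (β x h : ℝ) (hβ : 0 < β) (hx : 0 < x) (hh : h ≠ 0) :
    Mresp β x h < PX β x h := by
  have hh2 : 0 < h ^ 2 := pow_pos (abs_pos.mpr hh) 2 |>.trans_eq (sq_abs h)
  have hD : 0 < h ^ 2 + x := by positivity
  unfold PX Mresp
  rw [sub_lt_sub_iff_left, div_lt_div_iff₀ (by positivity) (by positivity)]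
  nlinarith [mul_pos (mul_pos hβ hx) (pow_pos hh2 2), pow_pos hD 2, pow_pos hD 3,
    mul_pos (mul_pos (mul_pos hβ hx) (pow_pos hh2 2)) (pow_pos hD 2)]

/-- strict Hubble decrease under ghost freedom in the explicit model:
if at time `t` one has `X(t) > 0`, `H(t) ≠ 0`, `M(X(t),H(t)) > 0` and the
Raychaudhuri equation `H′(t) = −X(t)·P_X(X(t),H(t))`, then `H′(t) < 0`. -/
theorem strict_hubble_decrease (β V : ℝ) (hβ : 0 < β) (X H : ℝ → ℝ) (t : ℝ)
    (hHdiff : DifferentiableAt ℝ H t)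
    (hX : 0 < X t) (hH : H t ≠ 0) (hM : 0 < Mresp β (X t) (H t))
    (hRay : deriv H t = -(X t * PX β (X t) (H t))) :
    deriv H t < 0 := by
  have hPX : 0 < PX β (X t) (H t) := hM.trans (PX_gt_Mresp β (X t) (H t) hβ hX hH)
  rw [hRay]
  simpa using mul_pos hX hPX
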